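/- If φ is an indecomposable finite or semifinite harmonic function on a graded graph Γ, then its support supp(φ) = {λ : φ(λ) > 0} is a primitive (saturated) coideal: any two vertices in supp(φ) have a common majorant in supp(φ). -/

import Mathlib

open Filter Topology ENNReal
open scoped Classical

noncomputable section

structure GradedGraph where
  V : Type
  lvl : V → ℕ
  levelFinite : ∀ n : ℕ, {v : V | lvl v = n}.Finite
  k : V → V → ℝ
  k_nonneg : ∀ a b, 0 ≤ k a b
  k_grade : ∀ a b, k a b ≠ 0 → lvl b = lvl a + 1
  exists_up : ∀ a, ∃ b, 0 < k a b

namespace GradedGraph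

variable (G : GradedGraph)

/-- The edge relation `λ ↗ μ`. -/
def Adj (a b : G.V) : Prop := 0 < G.k a b

/-- The path order: `a ≤ b` iff there is a (possibly empty) path from `a` to `b`. -/
def Le : G.V → G.V → Prop := Relation.ReflTransGen G.Adj

/-- `dimAux n a b` : weighted number of paths of length `n` from `a` to `b`. -/
def dimAux : ℕ → G.V → G.V → ℝ
  | 0, a, b => if a = b then 1 else 0
  | n + 1, a, b => ∑ᶠ c, dimAux n a c * G.k c b

/-- The shifted dimension `dim(a,b)`: weighted number of paths from `a` to `b`. -/
def dim (a b : G.V) : ℝ := G.dimAux (G.lvl b - G.lvl a) a b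

def IsIdeal (I : Set G.V) : Prop := ∀ a ∈ I, ∀ b, G.Le a b → b ∈ I

def IsCoideal (J : Set G.V) : Prop := ∀ a ∈ J, ∀ b, G.Le b a → b ∈ J

def IsSaturatedIdeal (I : Set G.V) : Prop :=
  G.IsIdeal I ∧ ∀ a, (∀ b, G.Adj a b → b ∈ I) → a ∈ I

def IsSaturatedCoideal (J : Set G.V) : Prop :=
  G.IsCoideal J ∧ ∀ a ∈ J, ∃ b ∈ J, G.Adj a b

def IsPrimitiveCoideal (J : Set G.V) : Prop :=
  G.IsSaturatedCoideal J ∧ ∀ J1 J2 : Set G.V, G.IsSaturatedCoideal J1 →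
    G.IsSaturatedCoideal J2 → J = J1 ∪ J2 → J = J1 ∨ J = J2

/-- A harmonic function `φ : Γ → ℝ≥0 ∪ {+∞}`. -/
def Harmonic (φ : G.V → ℝ≥0∞) : Prop :=
  ∀ a, φ a = ∑ᶠ b, ENNReal.ofReal (G.k a b) * φ b

/-- The submodule of relations `λ = Σ_{μ : λ↗μ} κ(λ,μ)·μ` in the free module on vertices. -/
def relSub : Submodule ℝ (G.V →₀ ℝ) :=
  Submodule.span ℝ
    {x | ∃ a : G.V, x = Finsupp.single a 1 - ∑ᶠ b, G.k a b • Finsupp.single b (1 : ℝ)}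

/-- The group `K_0(Γ)`. -/
abbrev K0 := (G.V →₀ ℝ) ⧸ G.relSub

def toK0 : (G.V →₀ ℝ) →ₗ[ℝ] G.K0 := G.relSub.mkQ

/-- The class of a vertex in `K_0(Γ)`. -/
def vtx (a : G.V) : G.K0 := G.toK0 (Finsupp.single a 1)

/-- The positive cone `K_0^+(Γ)` generated by the vertices. -/
def cone : Set G.K0 := {x | ∃ c : G.V →₀ ℝ, (∀ a, 0 ≤ c a) ∧ x = G.toK0 c}

/-- The partial order `x ≤_K y` defined by the cone. -/
def leK (x y : G.K0) : Prop := y - x ∈ G.cone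

/-- The value of (the `ℝ≥0`-linear extension of) `φ` on a nonnegative element of the
free module on vertices. -/
def evalC (φ : G.V → ℝ≥0∞) (c : G.V →₀ ℝ) : ℝ≥0∞ :=
  ∑ a ∈ c.support, ENNReal.ofReal (c a) * φ a

/-- A semifinite harmonic function: it is harmonic, not everywhere finite, and its value
on any element of the cone is the supremum of its finite values on smaller cone elements
(stated on nonnegative representatives). -/
def Semifinite (φ : G.V → ℝ≥0∞) : Prop :=
  G.Harmonic φ ∧ (∃ a, φ a = ⊤) ∧
    ∀ c : G.V →₀ ℝ, (∀ a, 0 ≤ c a) →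
      G.evalC φ c = ⨆ d : {d : G.V →₀ ℝ //
        (∀ a, 0 ≤ d a) ∧ G.leK (G.toK0 d) (G.toK0 c) ∧ G.evalC φ d ≠ ⊤},
          G.evalC φ d.1

/-- A finite or semifinite harmonic function. -/
def FinOrSemifinite (φ : G.V → ℝ≥0∞) : Prop :=
  (G.Harmonic φ ∧ ∀ a, φ a ≠ ⊤) ∨ G.Semifinite φ

/-- An indecomposable (finite or semifinite, not identically zero) harmonic function:
any finite or semifinite harmonic `ψ ≤ φ` not vanishing identically on the finiteness
ideal of `φ` is proportional to `φ` on the finiteness ideal of `φ`. -/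
def Indecomposable (φ : G.V → ℝ≥0∞) : Prop :=
  G.FinOrSemifinite φ ∧ (∃ a, φ a ≠ 0) ∧
    ∀ ψ : G.V → ℝ≥0∞, G.FinOrSemifinite ψ → (∀ a, ψ a ≤ φ a) →
      (∃ a, φ a ≠ ⊤ ∧ ψ a ≠ 0) →
        ∃ C : ℝ≥0∞, ∀ a, φ a ≠ ⊤ → ψ a = C * φ a

end GradedGraph

structure BranchingGraph extends GradedGraph where
  root : V
  root_lvl : lvl root = 0
  root_unique : ∀ v, lvl v = 0 → v = root
  exists_down : ∀ v, lvl v ≠ 0 → ∃ u, 0 < k u v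

end

/-! The support of a harmonic function is always a saturated coideal. For a common majorant
of `a` and `b`, first move up to vertices `w ≥ a` and `w' ≥ b` of the support at which `φ`
is finite (for semifinite `φ` this uses its approximation property). The least harmonic
function `ψ` agreeing with `φ` above `w` satisfies `ψ ≤ φ` and is again finite or
semifinite, so by indecomposability it is a multiple of `φ` where `φ` is finite, and the
multiple is nonzero since `ψ(w) = φ(w)`. Thus `ψ(w') ≠ 0`, which forces `w'` below some
vertex of the support above `w`.

Semifiniteness of `ψ` rests on one estimate: `φ(e) ≤ ψ(c)` whenever `e ≤ c` in `K₀` and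
`e ≥ 0` is supported in an ideal on which `φ` is finite. Writing `c - e - f = x - push x`
with `f ≥ 0`, pushing forward `N` times and pairing with `φ` shows that
`N (φ(e) - ψ(c))` stays bounded in `N`. -/

noncomputable section

namespace Finsupp

variable {α M : Type*} [Zero M] [Preorder M] {p : α → Prop} [DecidablePred p] {z : α →₀ M}

lemma filter_nonneg (hz : 0 ≤ z) : 0 ≤ z.filter p := fun v => by
  rw [filter_apply]
  split_ifs
  exacts [hz v, le_rfl]

lemma filter_le_self (hz : 0 ≤ z) : z.filter p ≤ z := fun v => by
  rw [filter_apply]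
  split_ifs
  exacts [le_rfl, hz v]

end Finsupp

lemma le_of_telescoping {M : Type*} [AddCommGroup M] [Module ℝ M] (ℓ : M →ₗ[ℝ] ℝ)
    (P : Module.End ℝ M) {c e f x : M} {L E B : ℝ} (hc : ∀ n, ℓ ((P ^ n) c) ≤ L)
    (he : ∀ n, ℓ ((P ^ n) e) = E) (hf : ∀ n, 0 ≤ ℓ ((P ^ n) f)) (hx : ∀ n, ℓ ((P ^ n) x) ≤ B)
    (h : c - e - f = x - P x) : E ≤ L := by
  have hstep : ∀ n, ℓ ((P ^ n) x) + (E - L) ≤ ℓ ((P ^ (n + 1)) x) := fun n => by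
    have hn := congrArg (fun z => ℓ ((P ^ n) z)) h
    simp only [map_sub, ← Module.End.mul_apply, ← pow_succ] at hn
    linarith [hc n, he n, hf n]
  have hgrowth : ∀ N : ℕ, ℓ x + N * (E - L) ≤ ℓ ((P ^ N) x) := fun N => by
    induction N with
    | zero => simp
    | succ N ih => push_cast; linarith [hstep N]
  by_contra hLE
  obtain ⟨N, hN⟩ := exists_nat_gt ((B - ℓ x) / (E - L))
  rw [div_lt_iff₀ (by linarith)] at hN
  linarith [hgrowth N, hx N]

namespace GradedGraph

variable {G : GradedGraph}

section Basic

variable (G) in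
def level (n : ℕ) : Finset G.V := (G.levelFinite n).toFinset

lemma mem_level {n : ℕ} {v : G.V} : v ∈ G.level n ↔ G.lvl v = n := by
  simp [level]

lemma mem_level_succ_of_ne_zero {v w : G.V} (h : G.k v w ≠ 0) : w ∈ G.level (G.lvl v + 1) :=
  mem_level.2 (G.k_grade v w h)

lemma adj_of_ne_zero {v w : G.V} (h : G.k v w ≠ 0) : G.Adj v w :=
  (G.k_nonneg v w).lt_of_ne' h

lemma ofReal_k_ne_zero {v w : G.V} (h : G.Adj v w) : ENNReal.ofReal (G.k v w) ≠ 0 :=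
  (ENNReal.ofReal_pos.2 h).ne'

lemma IsIdeal.mem_of_adj {I : Set G.V} (hI : G.IsIdeal I) {v w : G.V} (hv : v ∈ I)
    (hvw : G.Adj v w) : w ∈ I :=
  hI v hv w (.single hvw)

lemma isIdeal_setOf_le (w : G.V) : G.IsIdeal {v | G.Le w v} :=
  fun _ hv _ h => Relation.ReflTransGen.trans hv h

end Basic

section Avg

variable (G) in
def avg (f : G.V → ℝ≥0∞) (v : G.V) : ℝ≥0∞ := ∑ᶠ w, ENNReal.ofReal (G.k v w) * f w

lemma avg_eq_sum_of_subset (f : G.V → ℝ≥0∞) {v : G.V} {s : Finset G.V}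
    (hs : G.level (G.lvl v + 1) ⊆ s) :
    G.avg f v = ∑ w ∈ s, ENNReal.ofReal (G.k v w) * f w := by
  refine finsum_eq_sum_of_support_subset _ fun w hw => hs (mem_level_succ_of_ne_zero ?_)
  rintro h
  simp [h] at hw

lemma avg_eq_sum (f : G.V → ℝ≥0∞) (v : G.V) :
    G.avg f v = ∑ w ∈ G.level (G.lvl v + 1), ENNReal.ofReal (G.k v w) * f w :=
  avg_eq_sum_of_subset f subset_rfl

lemma harmonic_iff_avg_eq {φ : G.V → ℝ≥0∞} : G.Harmonic φ ↔ G.avg φ = φ :=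
  ⟨fun h => funext fun v => (h v).symm, fun h v => (congrFun h v).symm⟩

lemma monotone_avg : Monotone G.avg := fun _ _ h v => by
  simp only [avg_eq_sum]
  gcongr with w
  exact h w

lemma avg_congr {f g : G.V → ℝ≥0∞} {v : G.V} (h : ∀ w, G.Adj v w → f w = g w) :
    G.avg f v = G.avg g v := by
  simp only [avg_eq_sum]
  refine Finset.sum_congr rfl fun w _ => ?_
  by_cases hk : G.k v w = 0
  · simp [hk]
  · rw [h w (adj_of_ne_zero hk)]

lemma mul_le_avg (f : G.V → ℝ≥0∞) (v w : G.V) :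
    ENNReal.ofReal (G.k v w) * f w ≤ G.avg f v := by
  by_cases hk : G.k v w = 0
  · simp [hk]
  · rw [avg_eq_sum]
    exact Finset.single_le_sum (f := fun w => ENNReal.ofReal (G.k v w) * f w)
      (fun _ _ => zero_le) (mem_level_succ_of_ne_zero hk)

lemma exists_adj_of_avg_ne_zero {f : G.V → ℝ≥0∞} {v : G.V} (h : G.avg f v ≠ 0) :
    ∃ w, G.Adj v w ∧ f w ≠ 0 := by
  rw [avg_eq_sum] at h
  obtain ⟨w, -, hw⟩ := Finset.exists_ne_zero_of_sum_ne_zero h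
  exact ⟨w, adj_of_ne_zero fun h0 => hw (by simp [h0]), fun h0 => hw (by simp [h0])⟩

end Avg

namespace Harmonic

variable {φ : G.V → ℝ≥0∞} (hφ : G.Harmonic φ)
include hφ

lemma mul_le (v w : G.V) : ENNReal.ofReal (G.k v w) * φ w ≤ φ v :=
  (mul_le_avg φ v w).trans_eq (congrFun (harmonic_iff_avg_eq.1 hφ) v)

lemma ne_zero_of_le {a b : G.V} (hba : G.Le b a) (ha : φ a ≠ 0) : φ b ≠ 0 := by
  induction hba using Relation.ReflTransGen.head_induction_on with
  | refl => exact ha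
  | head hadj _ ih =>
    exact fun h0 => mul_ne_zero (ofReal_k_ne_zero hadj) ih
      (le_zero_iff.1 (h0 ▸ hφ.mul_le _ _))

lemma ne_top_of_le {a b : G.V} (hab : G.Le a b) (ha : φ a ≠ ⊤) : φ b ≠ ⊤ := by
  induction hab with
  | refl => exact ha
  | @tail b c _ hadj ih =>
    intro htop
    have h := hφ.mul_le b c
    rw [htop, ENNReal.mul_top (ofReal_k_ne_zero hadj)] at h
    exact ih (top_le_iff.1 h)

lemma exists_adj_ne_zero {a : G.V} (ha : φ a ≠ 0) : ∃ b, G.Adj a b ∧ φ b ≠ 0 :=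
  exists_adj_of_avg_ne_zero (by rwa [harmonic_iff_avg_eq.1 hφ])

lemma isSaturatedCoideal_support : G.IsSaturatedCoideal {a | φ a ≠ 0} :=
  ⟨fun _ ha _ hba => hφ.ne_zero_of_le hba ha,
    fun _ ha => (hφ.exists_adj_ne_zero ha).imp fun _ h => ⟨h.2, h.1⟩⟩

lemma isIdeal_setOf_ne_top : G.IsIdeal {a | φ a ≠ ⊤} :=
  fun _ ha _ hab => hφ.ne_top_of_le hab ha

end Harmonic

lemma FinOrSemifinite.harmonic {φ : G.V → ℝ≥0∞} (h : G.FinOrSemifinite φ) : G.Harmonic φ :=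
  h.elim And.left And.left

section HarmonicExtension

variable (G) in
def harmExtSeq (I : Set G.V) (φ : G.V → ℝ≥0∞) (n : ℕ) : G.V → ℝ≥0∞ :=
  G.avg^[n] (I.indicator φ)

variable (G) in
/-- The least harmonic function agreeing with `φ` on the ideal `I`. -/
def harmExt (I : Set G.V) (φ : G.V → ℝ≥0∞) : G.V → ℝ≥0∞ := ⨆ n, G.harmExtSeq I φ n

variable {I : Set G.V} {φ : G.V → ℝ≥0∞}

lemma harmExtSeq_succ (n : ℕ) : G.harmExtSeq I φ (n + 1) = G.avg (G.harmExtSeq I φ n) :=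
  Function.iterate_succ_apply' _ _ _

lemma harmExt_apply (v : G.V) : G.harmExt I φ v = ⨆ n, G.harmExtSeq I φ n v :=
  iSup_apply

lemma exists_le_of_harmExtSeq_ne_zero {n : ℕ} {v : G.V} (h : G.harmExtSeq I φ n v ≠ 0) :
    ∃ c ∈ I, G.Le v c ∧ φ c ≠ 0 := by
  induction n generalizing v with
  | zero =>
    have hv : v ∈ I := by by_contra hv; simp [harmExtSeq, hv] at h
    exact ⟨v, hv, .refl, by simpa [harmExtSeq, hv] using h⟩
  | succ n ih =>
    rw [harmExtSeq_succ] at h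
    obtain ⟨w, hvw, hw⟩ := exists_adj_of_avg_ne_zero h
    obtain ⟨c, hcI, hwc, hc⟩ := ih hw
    exact ⟨c, hcI, .head hvw hwc, hc⟩

lemma exists_le_of_harmExt_ne_zero {v : G.V} (h : G.harmExt I φ v ≠ 0) :
    ∃ c ∈ I, G.Le v c ∧ φ c ≠ 0 := by
  rw [harmExt_apply, Ne, ENNReal.iSup_eq_zero, not_forall] at h
  exact exists_le_of_harmExtSeq_ne_zero h.choose_spec

lemma harmExtSeq_le (hφ : G.Harmonic φ) (n : ℕ) : G.harmExtSeq I φ n ≤ φ :=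
  (monotone_avg.iterate n (Set.indicator_le_self I φ)).trans_eq
    (Function.iterate_fixed (harmonic_iff_avg_eq.1 hφ) n)

lemma harmExt_le (hφ : G.Harmonic φ) : G.harmExt I φ ≤ φ :=
  iSup_le (harmExtSeq_le hφ)

section

variable (hI : G.IsIdeal I) (hφ : G.Harmonic φ)
include hI hφ

lemma avg_indicator_of_mem {v : G.V} (hv : v ∈ I) : G.avg (I.indicator φ) v = φ v := by
  rw [avg_congr fun w hvw => Set.indicator_of_mem (hI.mem_of_adj hv hvw) φ,
    harmonic_iff_avg_eq.1 hφ]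

lemma harmExtSeq_of_mem (n : ℕ) {v : G.V} (hv : v ∈ I) : G.harmExtSeq I φ n v = φ v := by
  induction n generalizing v with
  | zero => exact Set.indicator_of_mem hv φ
  | succ n ih =>
    rw [harmExtSeq_succ, avg_congr fun w hvw => ih (hI.mem_of_adj hv hvw),
      harmonic_iff_avg_eq.1 hφ]

lemma monotone_harmExtSeq : Monotone (G.harmExtSeq I φ) := by
  refine monotone_nat_of_le_succ fun n => ?_
  change G.avg^[n] _ ≤ G.avg^[n + 1] _
  rw [Function.iterate_succ_apply]
  refine monotone_avg.iterate n fun v => ?_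
  by_cases hv : v ∈ I
  · rw [avg_indicator_of_mem hI hφ hv, Set.indicator_of_mem hv]
  · simp [hv]

lemma harmExt_of_mem {v : G.V} (hv : v ∈ I) : G.harmExt I φ v = φ v := by
  rw [harmExt_apply]
  simp [harmExtSeq_of_mem hI hφ _ hv]

lemma harmonic_harmExt : G.Harmonic (G.harmExt I φ) := by
  refine harmonic_iff_avg_eq.2 (funext fun v => ?_)
  have hmono : ∀ w, Monotone fun n => ENNReal.ofReal (G.k v w) * G.harmExtSeq I φ n w :=
    fun w _ _ hmn => mul_le_mul_right (monotone_harmExtSeq hI hφ hmn w) _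
  simp_rw [avg_eq_sum, harmExt_apply, ENNReal.mul_iSup,
    ENNReal.finsetSum_iSup_of_monotone hmono, ← avg_eq_sum, ← harmExtSeq_succ]
  exact Monotone.iSup_nat_add (fun _ _ h => monotone_harmExtSeq hI hφ h v) 1

end

end HarmonicExtension

section Push

variable (G) in
def succVec (v : G.V) : G.V →₀ ℝ :=
  Finsupp.onFinset (G.level (G.lvl v + 1)) (G.k v) fun _ => mem_level_succ_of_ne_zero

@[simp] lemma succVec_apply (v w : G.V) : G.succVec v w = G.k v w := rfl

variable (G) in
def push : (G.V →₀ ℝ) →ₗ[ℝ] (G.V →₀ ℝ) := Finsupp.linearCombination ℝ G.succVec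

lemma push_single (v : G.V) (t : ℝ) : G.push (Finsupp.single v t) = t • G.succVec v :=
  Finsupp.linearCombination_single ℝ t v

lemma push_apply (z : G.V →₀ ℝ) (u : G.V) :
    G.push z u = ∑ v ∈ z.support, z v * G.k v u := by
  simp [push, Finsupp.linearCombination_apply, Finsupp.sum]

lemma push_nonneg {z : G.V →₀ ℝ} (hz : 0 ≤ z) : 0 ≤ G.push z := fun u => by
  rw [push_apply]
  exact Finset.sum_nonneg fun v _ => mul_nonneg (hz v) (G.k_nonneg v u)

lemma monotone_push : Monotone G.push := fun z z' h => by
  simpa using push_nonneg (sub_nonneg.2 h)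

lemma monotone_push_pow (n : ℕ) : Monotone (G.push ^ n) := by
  rw [Module.End.coe_pow]
  exact monotone_push.iterate n

lemma push_pow_nonneg (n : ℕ) {z : G.V →₀ ℝ} (hz : 0 ≤ z) : 0 ≤ (G.push ^ n) z := by
  simpa using monotone_push_pow n hz

lemma support_push_subset (z : G.V →₀ ℝ) :
    (G.push z).support ⊆ z.support.biUnion fun v => G.level (G.lvl v + 1) := fun u hu => by
  rw [Finsupp.mem_support_iff, push_apply] at hu
  obtain ⟨v, hv, hvu⟩ := Finset.exists_ne_zero_of_sum_ne_zero hu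
  exact Finset.mem_biUnion.2 ⟨v, hv, mem_level_succ_of_ne_zero fun h => hvu (by simp [h])⟩

lemma push_pow_apply_of_lvl_lt {n : ℕ} (z : G.V →₀ ℝ) {v : G.V} (h : G.lvl v < n) :
    (G.push ^ n) z v = 0 := by
  induction n generalizing v with
  | zero => omega
  | succ n ih =>
    rw [pow_succ', Module.End.mul_apply, push_apply]
    refine Finset.sum_eq_zero fun w _ => ?_
    by_cases hk : G.k w v = 0
    · simp [hk]
    · simp [ih (show G.lvl w < n by have := G.k_grade w v hk; omega)]

lemma finsum_smul_single_eq_succVec (a : G.V) :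
    ∑ᶠ b, G.k a b • Finsupp.single b (1 : ℝ) = G.succVec a := by
  rw [finsum_eq_sum_of_support_subset (s := G.level (G.lvl a + 1)) _ fun b hb =>
    mem_level_succ_of_ne_zero fun h => hb (by simp [h])]
  ext u
  by_cases hu : G.k a u = 0
  · simp [Finsupp.single_apply, hu]
  · simp [Finsupp.single_apply, mem_level_succ_of_ne_zero hu]

lemma sub_push_mem_relSub (z : G.V →₀ ℝ) : z - G.push z ∈ G.relSub := by
  induction z using Finsupp.induction_linear with
  | zero => simp
  | add f g hf hg =>
    rw [map_add, add_sub_add_comm]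
    exact add_mem hf hg
  | single a t =>
    rw [push_single, ← Finsupp.smul_single_one, ← smul_sub]
    exact Submodule.smul_mem _ _ (Submodule.subset_span ⟨a, by rw [finsum_smul_single_eq_succVec]⟩)

lemma toK0_push_pow (n : ℕ) (z : G.V →₀ ℝ) : G.toK0 ((G.push ^ n) z) = G.toK0 z := by
  induction n with
  | zero => rfl
  | succ n ih =>
    rw [pow_succ', Module.End.mul_apply, ← ih, eq_comm, ← sub_eq_zero, ← map_sub]
    exact (Submodule.Quotient.mk_eq_zero _).2 (sub_push_mem_relSub _)

lemma relSub_le_range : G.relSub ≤ LinearMap.range (LinearMap.id - G.push) := by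
  rw [relSub, Submodule.span_le]
  rintro _ ⟨a, rfl⟩
  exact ⟨Finsupp.single a 1, by
    rw [LinearMap.sub_apply, LinearMap.id_apply, push_single, one_smul,
      finsum_smul_single_eq_succVec]⟩

end Push

section Cone

lemma exists_of_leK {d c : G.V →₀ ℝ} (h : G.leK (G.toK0 d) (G.toK0 c)) :
    ∃ f x : G.V →₀ ℝ, 0 ≤ f ∧ c - d - f = x - G.push x := by
  obtain ⟨f, hf, heq⟩ := h
  have hmem : c - d - f ∈ G.relSub := by
    rw [← Submodule.Quotient.mk_eq_zero]
    change G.toK0 (c - d - f) = 0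
    rw [map_sub, map_sub, ← heq, sub_self]
  obtain ⟨x, hx⟩ := relSub_le_range hmem
  exact ⟨f, x, hf, hx.symm⟩

lemma leK_toK0_trans {e d c : G.V →₀ ℝ} (h₁ : G.leK (G.toK0 e) (G.toK0 d))
    (h₂ : G.leK (G.toK0 d) (G.toK0 c)) : G.leK (G.toK0 e) (G.toK0 c) := by
  obtain ⟨f₁, hf₁, heq₁⟩ := h₁
  obtain ⟨f₂, hf₂, heq₂⟩ := h₂
  refine ⟨f₁ + f₂, fun v => add_nonneg (hf₁ v) (hf₂ v), ?_⟩
  rw [map_add, ← heq₁, ← heq₂, sub_add_sub_cancel']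

lemma leK_filter_push_pow (I : Set G.V) {c : G.V →₀ ℝ} (hc : 0 ≤ c) (n : ℕ) :
    G.leK (G.toK0 (((G.push ^ n) c).filter (· ∈ I))) (G.toK0 c) := by
  refine ⟨(G.push ^ n) c - ((G.push ^ n) c).filter (· ∈ I),
    sub_nonneg.2 (Finsupp.filter_le_self (push_pow_nonneg n hc)), ?_⟩
  rw [map_sub, toK0_push_pow]

end Cone

section Evaluation

lemma evalC_eq_sum_of_subset (f : G.V → ℝ≥0∞) {c : G.V →₀ ℝ} {s : Finset G.V}
    (hs : c.support ⊆ s) : G.evalC f c = ∑ v ∈ s, ENNReal.ofReal (c v) * f v :=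
  Finset.sum_subset hs fun v _ hv => by simp [Finsupp.notMem_support_iff.1 hv]

lemma evalC_single (f : G.V → ℝ≥0∞) (a : G.V) : G.evalC f (Finsupp.single a 1) = f a := by
  simp [evalC_eq_sum_of_subset f Finsupp.support_single_subset]

lemma evalC_mono {f g : G.V → ℝ≥0∞} (h : f ≤ g) (c : G.V →₀ ℝ) : G.evalC f c ≤ G.evalC g c :=
  Finset.sum_le_sum fun v _ => mul_le_mul_right (h v) _

lemma evalC_congr {f g : G.V → ℝ≥0∞} {c : G.V →₀ ℝ} (h : ∀ v ∈ c.support, f v = g v) :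
    G.evalC f c = G.evalC g c :=
  Finset.sum_congr rfl fun v hv => by rw [h v hv]

lemma evalC_iSup {f : ℕ → G.V → ℝ≥0∞} (hf : Monotone f) (c : G.V →₀ ℝ) :
    G.evalC (⨆ n, f n) c = ⨆ n, G.evalC (f n) c := by
  simp_rw [evalC, iSup_apply, ENNReal.mul_iSup]
  exact ENNReal.finsetSum_iSup_of_monotone fun v _ _ hmn => mul_le_mul_right (hf hmn v) _

lemma evalC_indicator (I : Set G.V) (f : G.V → ℝ≥0∞) (c : G.V →₀ ℝ) :
    G.evalC (I.indicator f) c = G.evalC f (c.filter (· ∈ I)) := by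
  rw [evalC_eq_sum_of_subset f (Finset.filter_subset (· ∈ I) c.support)]
  refine Finset.sum_congr rfl fun v _ => ?_
  by_cases hv : v ∈ I <;> simp [hv]

lemma support_subset_of_evalC_ne_top {f : G.V → ℝ≥0∞} {c : G.V →₀ ℝ} (hc : 0 ≤ c)
    (h : G.evalC f c ≠ ⊤) : ↑c.support ⊆ {v | f v ≠ ⊤} := fun v hv htop => by
  have hcv : ENNReal.ofReal (c v) ≠ 0 :=
    (ENNReal.ofReal_pos.2 ((hc v).lt_of_ne' (Finsupp.mem_support_iff.1 hv))).ne'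
  have hle : ENNReal.ofReal (c v) * f v ≤ G.evalC f c :=
    Finset.single_le_sum (f := fun v => ENNReal.ofReal (c v) * f v) (fun _ _ => zero_le) hv
  rw [htop, ENNReal.mul_top hcv] at hle
  exact h (top_le_iff.1 hle)

lemma evalC_push (f : G.V → ℝ≥0∞) {c : G.V →₀ ℝ} (hc : 0 ≤ c) :
    G.evalC f (G.push c) = G.evalC (G.avg f) c := by
  set U := c.support.biUnion fun v => G.level (G.lvl v + 1)
  have hU : ∀ v ∈ c.support, G.level (G.lvl v + 1) ⊆ U := fun v hv =>
    Finset.subset_biUnion_of_mem (fun v => G.level (G.lvl v + 1)) hv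
  calc G.evalC f (G.push c)
      = ∑ u ∈ U, ∑ v ∈ c.support, ENNReal.ofReal (c v) * (ENNReal.ofReal (G.k v u) * f u) := by
        rw [evalC_eq_sum_of_subset f (support_push_subset c)]
        refine Finset.sum_congr rfl fun u _ => ?_
        rw [push_apply, ENNReal.ofReal_sum_of_nonneg fun v _ => mul_nonneg (hc v) (G.k_nonneg v u),
          Finset.sum_mul]
        exact Finset.sum_congr rfl fun v _ => by rw [ENNReal.ofReal_mul (hc v), mul_assoc]
    _ = G.evalC (G.avg f) c := by
        rw [Finset.sum_comm]
        exact Finset.sum_congr rfl fun v hv => by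
          rw [← Finset.mul_sum, avg_eq_sum_of_subset f (hU v hv)]

lemma evalC_push_pow (f : G.V → ℝ≥0∞) {c : G.V →₀ ℝ} (hc : 0 ≤ c) (n : ℕ) :
    G.evalC f ((G.push ^ n) c) = G.evalC (G.avg^[n] f) c := by
  induction n generalizing f with
  | zero => rfl
  | succ n ih =>
    rw [pow_succ', Module.End.mul_apply, evalC_push f (push_pow_nonneg n hc), ih,
      Function.iterate_succ_apply]

variable (G) in
def evalReal (g : G.V → ℝ≥0∞) : (G.V →₀ ℝ) →ₗ[ℝ] ℝ :=
  Finsupp.linearCombination ℝ fun v => (g v).toReal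

lemma evalReal_apply (g : G.V → ℝ≥0∞) (z : G.V →₀ ℝ) :
    G.evalReal g z = ∑ v ∈ z.support, z v * (g v).toReal := by
  simp [evalReal, Finsupp.linearCombination_apply, Finsupp.sum]

lemma evalReal_nonneg {g : G.V → ℝ≥0∞} {z : G.V →₀ ℝ} (hz : 0 ≤ z) : 0 ≤ G.evalReal g z := by
  rw [evalReal_apply]
  exact Finset.sum_nonneg fun v _ => mul_nonneg (hz v) ENNReal.toReal_nonneg

lemma monotone_evalReal (g : G.V → ℝ≥0∞) : Monotone (G.evalReal g) := fun z z' h => by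
  simpa using evalReal_nonneg (g := g) (sub_nonneg.2 h)

lemma ofReal_evalReal {g : G.V → ℝ≥0∞} (hg : ∀ v, g v ≠ ⊤) {z : G.V →₀ ℝ} (hz : 0 ≤ z) :
    ENNReal.ofReal (G.evalReal g z) = G.evalC g z := by
  rw [evalReal_apply,
    ENNReal.ofReal_sum_of_nonneg fun v _ => mul_nonneg (hz v) ENNReal.toReal_nonneg]
  exact Finset.sum_congr rfl fun v _ => by
    rw [ENNReal.ofReal_mul (hz v), ENNReal.ofReal_toReal (hg v)]

end Evaluation

lemma exists_le_sum_push_pow {c e f x : G.V →₀ ℝ} (hc : 0 ≤ c) (he : 0 ≤ e) (hf : 0 ≤ f)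
    (h : c - e - f = x - G.push x) : ∃ K, x ≤ ∑ m ∈ Finset.range K, (G.push ^ m) c := by
  set K := x.support.sup G.lvl + 1
  -- `x` lives in levels `< K`, where `push ^ K` vanishes
  have htel : x - (G.push ^ K) x = ∑ m ∈ Finset.range K, (G.push ^ m) (c - e - f) := by
    simp_rw [h, map_sub, ← Module.End.mul_apply, ← pow_succ]
    rw [Finset.sum_range_sub' (fun m => (G.push ^ m) x), pow_zero, Module.End.one_apply]
  have hsum : ∑ m ∈ Finset.range K, (G.push ^ m) (c - e - f) ≤
      ∑ m ∈ Finset.range K, (G.push ^ m) c := Finset.sum_le_sum fun m _ =>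
    monotone_push_pow m (by rw [sub_sub]; exact sub_le_self _ (add_nonneg he hf))
  refine ⟨K, fun v => ?_⟩
  by_cases hv : G.lvl v < K
  · calc x v = (x - (G.push ^ K) x) v := by simp [push_pow_apply_of_lvl_lt x hv]
      _ ≤ _ := htel ▸ hsum v
  · have hxv : x v = 0 := Finsupp.notMem_support_iff.1 fun hmem =>
      hv (Nat.lt_succ_of_le (Finset.le_sup hmem))
    rw [hxv]
    exact Finset.sum_nonneg (fun m _ => push_pow_nonneg m hc) v

section Semifinite

variable {I : Set G.V} {φ : G.V → ℝ≥0∞}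

lemma evalC_harmExtSeq {c : G.V →₀ ℝ} (hc : 0 ≤ c) (n : ℕ) :
    G.evalC (G.harmExtSeq I φ n) c = G.evalC (I.indicator φ) ((G.push ^ n) c) :=
  (evalC_push_pow _ hc n).symm

lemma evalC_harmExt (hI : G.IsIdeal I) (hφ : G.Harmonic φ) {c : G.V →₀ ℝ} (hc : 0 ≤ c) :
    G.evalC (G.harmExt I φ) c = ⨆ n, G.evalC φ (((G.push ^ n) c).filter (· ∈ I)) := by
  simp_rw [harmExt, evalC_iSup (monotone_harmExtSeq hI hφ), evalC_harmExtSeq hc, evalC_indicator]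

lemma indicator_ne_top (hfin : ∀ v ∈ I, φ v ≠ ⊤) (v : G.V) : I.indicator φ v ≠ ⊤ := by
  by_cases hv : v ∈ I <;> simp [hv, hfin]

variable (hI : G.IsIdeal I) (hfin : ∀ v ∈ I, φ v ≠ ⊤) (hφ : G.Harmonic φ)
include hI hfin hφ

lemma evalC_le_evalC_harmExt {c e : G.V →₀ ℝ} (hc : 0 ≤ c) (he : 0 ≤ e) (heI : ↑e.support ⊆ I)
    (hle : G.leK (G.toK0 e) (G.toK0 c)) : G.evalC φ e ≤ G.evalC (G.harmExt I φ) c := by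
  obtain hT | hT := eq_or_ne (G.evalC (G.harmExt I φ) c) ⊤
  · simp [hT]
  set g := I.indicator φ
  have hg : ∀ v, g v ≠ ⊤ := indicator_ne_top hfin
  obtain ⟨f, x, hf, hx⟩ := exists_of_leK hle
  obtain ⟨K, hxK⟩ := exists_le_sum_push_pow hc he hf hx
  set L := (G.evalC (G.harmExt I φ) c).toReal
  have hcL : ∀ n, G.evalReal g ((G.push ^ n) c) ≤ L := fun n => by
    rw [← ENNReal.ofReal_le_iff_le_toReal hT, ofReal_evalReal hg (push_pow_nonneg n hc),
      ← evalC_harmExtSeq hc]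
    exact evalC_mono (le_iSup (G.harmExtSeq I φ) n) c
  -- `e` is supported in `I`, where `φ` is harmonic and finite, so pushing preserves its mass
  have heE : ∀ n, G.evalReal g ((G.push ^ n) e) = G.evalReal g e := fun n => by
    rw [← ENNReal.ofReal_eq_ofReal_iff (evalReal_nonneg (push_pow_nonneg n he))
      (evalReal_nonneg he), ofReal_evalReal hg (push_pow_nonneg n he), ofReal_evalReal hg he,
      ← evalC_harmExtSeq he]
    exact evalC_congr fun v hv => by
      rw [harmExtSeq_of_mem hI hφ n (heI hv)]
      exact (Set.indicator_of_mem (heI hv) φ).symm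
  have hxB : ∀ n, G.evalReal g ((G.push ^ n) x) ≤ K * L := fun n => calc
    _ ≤ G.evalReal g ((G.push ^ n) (∑ m ∈ Finset.range K, (G.push ^ m) c)) :=
        monotone_evalReal g (monotone_push_pow n hxK)
    _ = ∑ m ∈ Finset.range K, G.evalReal g ((G.push ^ (n + m)) c) := by
        simp [map_sum, pow_add]
    _ ≤ K * L := by simpa using Finset.sum_le_sum fun m (_ : m ∈ Finset.range K) => hcL (n + m)
  have hEL := le_of_telescoping (G.evalReal g) G.push hcL heE
    (fun n => evalReal_nonneg (push_pow_nonneg n hf)) hxB hx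
  rw [evalC_congr fun v hv => (Set.indicator_of_mem (heI hv) φ).symm, ← ofReal_evalReal hg he,
    ← ENNReal.ofReal_toReal hT]
  exact ENNReal.ofReal_le_ofReal hEL

lemma evalC_harmExt_eq_iSup {c : G.V →₀ ℝ} (hc : ∀ a, 0 ≤ c a) :
    G.evalC (G.harmExt I φ) c = ⨆ d : {d : G.V →₀ ℝ //
        (∀ a, 0 ≤ d a) ∧ G.leK (G.toK0 d) (G.toK0 c) ∧ G.evalC (G.harmExt I φ) d ≠ ⊤},
          G.evalC (G.harmExt I φ) d.1 := by
  refine le_antisymm ?_ (iSup_le fun ⟨d, hd, hdc, _⟩ => ?_)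
  · rw [evalC_harmExt hI hφ hc]
    refine iSup_le fun n => ?_
    set e := ((G.push ^ n) c).filter (· ∈ I)
    have he : G.evalC (G.harmExt I φ) e = G.evalC φ e := evalC_congr fun v hv =>
      harmExt_of_mem hI hφ (Finset.mem_filter.1 hv).2
    refine le_iSup_of_le ⟨e, Finsupp.filter_nonneg (push_pow_nonneg n hc),
      leK_filter_push_pow I hc n, ?_⟩ he.ge
    rw [he, ← evalC_indicator, ← ofReal_evalReal (indicator_ne_top hfin) (push_pow_nonneg n hc)]
    exact ENNReal.ofReal_ne_top
  · rw [evalC_harmExt hI hφ hd]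
    exact iSup_le fun n => evalC_le_evalC_harmExt hI hfin hφ hc
      (Finsupp.filter_nonneg (push_pow_nonneg n hd))
      (fun v hv => (Finset.mem_filter.1 hv).2)
      (leK_toK0_trans (leK_filter_push_pow I hd n) hdc)

lemma finOrSemifinite_harmExt : G.FinOrSemifinite (G.harmExt I φ) := by
  by_cases htop : ∀ v, G.harmExt I φ v ≠ ⊤
  · exact .inl ⟨harmonic_harmExt hI hφ, htop⟩
  · push Not at htop
    exact .inr ⟨harmonic_harmExt hI hφ, htop, fun c hc => evalC_harmExt_eq_iSup hI hfin hφ hc⟩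

end Semifinite

lemma Semifinite.exists_le_ne_zero_ne_top {φ : G.V → ℝ≥0∞} (h : G.Semifinite φ) {a : G.V}
    (ha : φ a ≠ 0) : ∃ w, G.Le a w ∧ φ w ≠ 0 ∧ φ w ≠ ⊤ := by
  obtain ⟨hφ, -, hsup⟩ := h
  obtain hatop | hatop := ne_or_eq (φ a) ⊤
  · exact ⟨a, .refl, ha, hatop⟩
  have hδ : 0 ≤ Finsupp.single a (1 : ℝ) := Finsupp.single_nonneg.2 zero_le_one
  -- the finite approximants of `δ_a` are supported where `φ` is finite
  have hψa : φ a ≤ G.harmExt {v | φ v ≠ ⊤} φ a := by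
    rw [← evalC_single φ a, hsup _ hδ, ← evalC_single (G.harmExt _ φ) a]
    exact iSup_le fun ⟨d, hd, hda, hdfin⟩ => evalC_le_evalC_harmExt hφ.isIdeal_setOf_ne_top
      (fun _ h => h) hφ hδ hd (support_subset_of_evalC_ne_top hd hdfin) hda
  rw [hatop, top_le_iff] at hψa
  obtain ⟨w, hwF, haw, hw⟩ := exists_le_of_harmExt_ne_zero (hψa ▸ ENNReal.top_ne_zero)
  exact ⟨w, haw, hw, hwF⟩

lemma FinOrSemifinite.exists_le_ne_zero_ne_top {φ : G.V → ℝ≥0∞} (h : G.FinOrSemifinite φ)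
    {a : G.V} (ha : φ a ≠ 0) : ∃ w, G.Le a w ∧ φ w ≠ 0 ∧ φ w ≠ ⊤ :=
  h.elim (fun h => ⟨a, .refl, ha, h.2 a⟩) (·.exists_le_ne_zero_ne_top ha)

lemma Indecomposable.harmExt_ne_zero {φ : G.V → ℝ≥0∞} (h : G.Indecomposable φ) {w v : G.V}
    (hw0 : φ w ≠ 0) (hwt : φ w ≠ ⊤) (hv0 : φ v ≠ 0) (hvt : φ v ≠ ⊤) :
    G.harmExt {u | G.Le w u} φ v ≠ 0 := by
  have hφ := h.1.harmonic
  have hI := isIdeal_setOf_le w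
  have hψw : G.harmExt {u | G.Le w u} φ w = φ w := harmExt_of_mem hI hφ .refl
  obtain ⟨C, hC⟩ := h.2.2 _
    (finOrSemifinite_harmExt hI (fun _ hu => hφ.ne_top_of_le hu hwt) hφ) (harmExt_le hφ)
    ⟨w, hwt, hψw ▸ hw0⟩
  rw [hC v hvt]
  refine mul_ne_zero (fun hC0 => hw0 ?_) hv0
  rw [← hψw, hC w hwt, hC0, zero_mul]

end GradedGraph

end

/-- the support of an indecomposable finite or semifinite harmonic
function is a primitive saturated coideal: it is a saturated coideal in which any two
vertices have a common majorant. -/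
theorem supp_primitive (G : GradedGraph) (φ : G.V → ℝ≥0∞)
    (hφ : G.Indecomposable φ) :
    G.IsSaturatedCoideal {a | φ a ≠ 0} ∧
      ∀ a b : G.V, φ a ≠ 0 → φ b ≠ 0 → ∃ c, φ c ≠ 0 ∧ G.Le a c ∧ G.Le b c := by
  refine ⟨hφ.1.harmonic.isSaturatedCoideal_support, fun a b ha hb => ?_⟩
  obtain ⟨w, haw, hw0, hwt⟩ := hφ.1.exists_le_ne_zero_ne_top ha
  obtain ⟨w', hbw', hw'0, hw't⟩ := hφ.1.exists_le_ne_zero_ne_top hb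
  obtain ⟨c, hwc, hw'c, hc⟩ :=
    GradedGraph.exists_le_of_harmExt_ne_zero (hφ.harmExt_ne_zero hw0 hwt hw'0 hw't)
  exact ⟨c, hc, haw.trans hwc, hbw'.trans hw'c⟩
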